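/- For 0 < t < π, ∫₀¹ log(x)/(x²-2cos(t)x+1) dx = -(1/sin t)·∑_{k=1}^∞ sin(kt)/k². -/

import Mathlib

/-! Since `x ^ 2 - 2 x cos t + 1 = |1 - x e^{it}|²`, taking imaginary parts of the geometric series
`e^{it} / (1 - x e^{it}) = ∑ x^k e^{i(k+1)t}` gives, for `|x| < 1`,
`sin t / (x ^ 2 - 2 x cos t + 1) = ∑ sin((k+1)t) x^k`. Multiplying by `log x` and integrating
termwise with `∫₀¹ x^k log x = -1/(k+1)²` gives the claim; the interchange is legitimate because the
coefficients are bounded and `x^k log x` has constant sign on `(0, 1]`, so the integrals of the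
absolute values are summable. -/

open Real MeasureTheory Set

lemma intervalIntegrable_pow_mul_log (k : ℕ) (a b : ℝ) :
    IntervalIntegrable (fun x : ℝ => x ^ k * log x) volume a b :=
  intervalIntegral.intervalIntegrable_log'.continuousOn_mul (continuous_pow k).continuousOn

lemma integral_pow_mul_log (k : ℕ) :
    ∫ x in (0:ℝ)..1, x ^ k * log x = -1 / ((k : ℝ) + 1) ^ 2 := by
  let F : ℝ → ℝ := fun x => x ^ (k + 1) * log x / (k + 1) - x ^ (k + 1) / (k + 1) ^ 2
  -- `F` is continuous at `0` because `x * log x → 0` there (and `log 0 = 0`)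
  have hF : ContinuousOn F (Icc 0 1) := by
    have h : Continuous fun x : ℝ => x ^ (k + 1) * log x :=
      ((continuous_pow k).mul continuous_mul_log).congr fun x => by simp only [Pi.mul_apply]; ring
    exact ((h.div_const _).sub ((continuous_pow (k + 1)).div_const _)).continuousOn
  have hF' : ∀ x ∈ Ioo (0:ℝ) 1, HasDerivAt F (x ^ k * log x) x := by
    intro x hx
    have hpow : HasDerivAt (· ^ (k + 1)) (((k : ℝ) + 1) * x ^ k) x := by
      simpa using hasDerivAt_pow (k + 1) x
    refine (((hpow.mul (hasDerivAt_log hx.1.ne')).div_const _).sub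
      (hpow.div_const _)).congr_deriv ?_
    have hx0 : x ≠ 0 := hx.1.ne'
    field_simp
    ring
  rw [intervalIntegral.integral_eq_sub_of_hasDerivAt_of_le zero_le_one hF hF'
    (intervalIntegrable_pow_mul_log k 0 1)]
  simp only [F, one_pow, log_one, log_zero, mul_zero, zero_div, sub_zero, zero_sub,
    ne_eq, Nat.add_eq_zero_iff, one_ne_zero, and_false, not_false_eq_true, zero_pow]
  field_simp

lemma hasSum_sin_mul_pow (t : ℝ) {x : ℝ} (hx : |x| < 1) :
    HasSum (fun k : ℕ => sin ((k + 1) * t) * x ^ k) (sin t / (x ^ 2 - 2 * cos t * x + 1)) := by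
  set w : ℂ := Complex.exp (t * Complex.I)
  have hw : ‖w‖ = 1 := Complex.norm_exp_ofReal_mul_I t
  have hxw : ‖(x : ℂ) * w‖ < 1 := by rwa [norm_mul, hw, mul_one, Complex.norm_real, norm_eq_abs]
  have hgeo := Complex.hasSum_im ((hasSum_geometric_of_norm_lt_one hxw).mul_left w)
  have hw0 : w ≠ 0 := Complex.exp_ne_zero _
  have hsum : w * (1 - x * w)⁻¹ = (Complex.exp (-t * Complex.I) - x)⁻¹ := by
    rw [neg_mul, Complex.exp_neg, ← inv_inv w, ← mul_inv, mul_sub, inv_inv,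
      mul_one, mul_left_comm, inv_mul_cancel₀ hw0, mul_one]
  convert hgeo using 1
  · funext k
    have hterm :
        w * (x * w) ^ k = ((x ^ k : ℝ) : ℂ) * Complex.exp (((k + 1) * t : ℝ) * Complex.I) := by
      rw [mul_pow, mul_left_comm, ← pow_succ', ← Complex.exp_nat_mul]
      push_cast
      ring_nf
    rw [hterm, Complex.im_ofReal_mul, Complex.exp_ofReal_mul_I_im, mul_comm]
  · rw [hsum, Complex.inv_im, Complex.normSq_apply]
    simp only [Complex.sub_re, Complex.sub_im, Complex.ofReal_re, Complex.ofReal_im,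
      ← Complex.ofReal_neg, Complex.exp_ofReal_mul_I_re, Complex.exp_ofReal_mul_I_im, cos_neg,
      sin_neg]
    congr 1
    · ring
    · nlinarith [sin_sq_add_cos_sq t]

lemma summable_abs_div_nat_add_one_sq {c : ℕ → ℝ} {C : ℝ} (hc : ∀ k, |c k| ≤ C) :
    Summable fun k : ℕ => |c k| / ((k : ℝ) + 1) ^ 2 := by
  have hp : Summable fun k : ℕ => 1 / ((k : ℝ) + 1) ^ 2 := by
    simpa using (summable_nat_add_iff 1).mpr (Real.summable_one_div_nat_pow.mpr one_lt_two)
  refine (hp.mul_left C).of_nonneg_of_le (fun k => by positivity) fun k => ?_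
  rw [mul_one_div]
  gcongr
  exact hc k

lemma integral_tsum_mul_pow_mul_log {c : ℕ → ℝ} {C : ℝ} (hc : ∀ k, |c k| ≤ C) :
    ∫ x in (0:ℝ)..1, ∑' k, c k * (x ^ k * log x) = -∑' k, c k / ((k : ℝ) + 1) ^ 2 := by
  have hint (k : ℕ) : IntegrableOn (fun x => c k * (x ^ k * log x)) (Ioc 0 1) :=
    ((intervalIntegrable_pow_mul_log k 0 1).const_mul (c k)).1
  have hI (k : ℕ) : ∫ x in Ioc (0:ℝ) 1, x ^ k * log x = -1 / ((k : ℝ) + 1) ^ 2 := by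
    rw [← intervalIntegral.integral_of_le zero_le_one, integral_pow_mul_log]
  -- on `(0, 1]` the factor `x ^ k * log x` is nonpositive
  have hnorm (k : ℕ) :
      ∫ x in Ioc (0:ℝ) 1, ‖c k * (x ^ k * log x)‖ = |c k| / ((k : ℝ) + 1) ^ 2 := by
    rw [setIntegral_congr_fun measurableSet_Ioc (g := fun x => -(|c k| * (x ^ k * log x)))
      fun x hx => ?_, integral_neg, integral_const_mul, hI]
    · ring
    have hneg : x ^ k * log x ≤ 0 :=
      mul_nonpos_of_nonneg_of_nonpos (pow_nonneg hx.1.le k) (log_nonpos hx.1.le hx.2)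
    rw [norm_mul, norm_eq_abs, norm_eq_abs, abs_of_nonpos hneg, mul_neg]
  rw [intervalIntegral.integral_of_le zero_le_one, ← integral_tsum_of_summable_integral_norm hint
    (by simpa only [hnorm] using summable_abs_div_nat_add_one_sq hc), ← tsum_neg]
  congr 1 with k
  rw [integral_const_mul, hI]
  ring

lemma log_div_quadratic_eq_tsum {t : ℝ} (hs : sin t ≠ 0) {x : ℝ} (hx : |x| < 1) :
    log x / (x ^ 2 - 2 * cos t * x + 1) =
      ∑' k : ℕ, sin ((k + 1) * t) / sin t * (x ^ k * log x) := by
  have hval : sin t / (x ^ 2 - 2 * cos t * x + 1) * (log x / sin t) =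
      log x / (x ^ 2 - 2 * cos t * x + 1) := by
    field_simp
  rw [← hval]
  exact (((hasSum_sin_mul_pow t hx).mul_right _).congr_fun fun k => by ring).tsum_eq.symm

theorem stmt10 (t : ℝ) (ht : 0 < t) (ht' : t < Real.pi) :
    ∫ x in (0:ℝ)..1, Real.log x / (x ^ 2 - 2 * Real.cos t * x + 1) =
      -(1 / Real.sin t) * ∑' k : ℕ, Real.sin ((k + 1) * t) / ((k : ℝ) + 1) ^ 2 := by
  have hs : 0 < sin t := sin_pos_of_pos_of_lt_pi ht ht'
  have hbound (k : ℕ) : |sin ((k + 1) * t) / sin t| ≤ 1 / sin t := by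
    rw [abs_div, abs_of_pos hs]
    gcongr
    exact abs_sin_le_one _
  have hpt : EqOn (fun x => log x / (x ^ 2 - 2 * cos t * x + 1))
      (fun x => ∑' k : ℕ, sin ((k + 1) * t) / sin t * (x ^ k * log x)) (uIcc 0 1) := by
    intro x hx
    rw [uIcc_of_le zero_le_one] at hx
    rcases hx.2.lt_or_eq with hx1 | rfl
    · exact log_div_quadratic_eq_tsum hs.ne' (abs_lt.2 ⟨by linarith [hx.1], hx1⟩)
    · simp -- both sides vanish since `log 1 = 0`
  rw [intervalIntegral.integral_congr hpt, integral_tsum_mul_pow_mul_log hbound, ← tsum_mul_left,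
    ← tsum_neg]
  congr 1 with k
  ring
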